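/- arXiv:2409.06880 — 14 statements merged into one kernel-verified Lean document; each statement's English description precedes it below -/
import Mathlib

section
/- Let M be a commutative additive monoid and suppose a = a₁ + ⋯ + a_t for some elements a₁, …, a_t ∈ M (t ≥ 1). Then sr(a) ≤ max(sr(a₁), …, sr(a_t)). -/
/-- `a` satisfies the `n`-stable rank condition in `M`. -/
def SRCond {M : Type*} [AddCommMonoid M] (a : M) (n : ℕ) : Prop :=
  ∀ x y : M, n • a + x = a + y → ∃ e : M, n • a = a + e ∧ e + x = y

/-- The stable rank of `a`: the least positive integer `n` such that `a` satisfies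
the `n`-stable rank condition, or `∞` if no such `n` exists. -/
noncomputable def sr {M : Type*} [AddCommMonoid M] (a : M) : ℕ∞ :=
  sInf {n : ℕ∞ | ∃ m : ℕ, 0 < m ∧ SRCond a m ∧ n = (m : ℕ∞)}
lemma srcond_succ {M : Type*} [AddCommMonoid M] {a : M} {n : ℕ} (h : SRCond a n) :
    SRCond a (n + 1) := by
  intro x y hxy
  have hxy' : n • a + (a + x) = a + y := by
    rw [succ_nsmul] at hxy; rw [← add_assoc]; exact hxy
  obtain ⟨e, he1, he2⟩ := h (a + x) y hxy'
  exact ⟨e + a, by rw [succ_nsmul, he1]; abel, by rw [← he2]; abel⟩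

lemma srcond_mono {M : Type*} [AddCommMonoid M] {a : M} {m n : ℕ} (hmn : m ≤ n)
    (h : SRCond a m) : SRCond a n := by
  induction n with
  | zero => simpa [Nat.le_zero.mp hmn] using h
  | succ k ih =>
    rcases Nat.lt_or_ge m (k + 1) with h' | h'
    · exact srcond_succ (ih (Nat.lt_succ_iff.mp h'))
    · simpa [le_antisymm hmn h'] using h

lemma srcond_zero {M : Type*} [AddCommMonoid M] (n : ℕ) : SRCond (0 : M) n := by
  intro x y hxy
  exact ⟨0, by simp, by simpa using hxy⟩

lemma srcond_add {M : Type*} [AddCommMonoid M] {a b : M} {n : ℕ}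
    (ha : SRCond a n) (hb : SRCond b n) : SRCond (a + b) n := by
  intro x y hxy
  have h1 : n • a + (n • b + x) = a + (b + y) := by
    rw [smul_add] at hxy; rw [← add_assoc, ← add_assoc]; exact hxy
  obtain ⟨e, he1, he2⟩ := ha _ _ h1
  have h2 : n • b + (e + x) = b + y := by rw [← he2]; abel
  obtain ⟨g, hg1, hg2⟩ := hb _ _ h2
  refine ⟨e + g, ?_, ?_⟩
  · rw [smul_add, he1, hg1]; abel
  · rw [← hg2]; abel

theorem stmt_1 {M : Type*} [AddCommMonoid M] (a : M) (t : ℕ) (ht : 0 < t)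
    (f : Fin t → M) (h : a = ∑ i, f i) :
    sr a ≤ ⨆ i, sr (f i) := by
  set N := ⨆ i, sr (f i) with hN
  rcases eq_or_ne N ⊤ with hT | hT
  · rw [hT]; exact le_top
  lift N to ℕ using hT with n hn
  -- n is positive
  have hone : (1 : ℕ∞) ≤ sr (f ⟨0, ht⟩) := by
    apply le_sInf
    rintro b ⟨m, hm, -, rfl⟩
    exact_mod_cast hm
  have hnpos : 0 < n := by
    have : (1 : ℕ∞) ≤ (n : ℕ∞) := hone.trans ((le_iSup (fun i => sr (f i)) ⟨0, ht⟩).trans_eq hN.symm)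
    exact_mod_cast this
  -- each f i satisfies SRCond at n
  have key : ∀ i, SRCond (f i) n := by
    intro i
    have hle : sr (f i) ≤ (n : ℕ∞) := (le_iSup (fun i => sr (f i)) i).trans_eq hN.symm
    have hlt : sr (f i) < ((n + 1 : ℕ) : ℕ∞) := lt_of_le_of_lt hle (by exact_mod_cast Nat.lt_succ_self n)
    obtain ⟨b, ⟨m, hm, hcond, rfl⟩, hblt⟩ := sInf_lt_iff.mp hlt
    have : m < n + 1 := by exact_mod_cast hblt
    exact srcond_mono (Nat.lt_succ_iff.mp this) hcond
  have hsum : SRCond a n := by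
    rw [h]
    exact Finset.sum_induction f (fun z => SRCond z n)
      (fun _ _ hx hy => srcond_add hx hy) (srcond_zero n) (fun i _ => key i)
  exact sInf_le ⟨n, hnpos, hsum, rfl⟩
end

section
/- Let M be a conical commutative additive monoid and a ∈ M. Then sr(a) = 1 if and only if a is cancellative, i.e., a + x = a + y implies x = y for all x, y ∈ M. -/
theorem stmt_2 {M : Type*} [AddCommMonoid M]
    (hconical : ∀ x y : M, x + y = 0 → x = 0 ∧ y = 0) (a : M) :
    sr a = 1 ↔ ∀ x y : M, a + x = a + y → x = y := by
  constructor
  · intro h x y hxy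
    have hne : {n : ℕ∞ | ∃ m : ℕ, 0 < m ∧ SRCond a m ∧ n = (m : ℕ∞)}.Nonempty := by
      by_contra hempty
      rw [Set.not_nonempty_iff_eq_empty] at hempty
      rw [sr, hempty, sInf_empty] at h
      exact (by simp : (⊤ : ℕ∞) ≠ 1) h
    have hmem := csInf_mem hne
    rw [sr] at h
    rw [h] at hmem
    obtain ⟨m, hm, hsr, hm1⟩ := hmem
    have : m = 1 := by exact_mod_cast hm1.symm
    subst this
    obtain ⟨e, hae, hexy⟩ := hsr x y (by simpa using hxy)
    have he0 : e = 0 := by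
      obtain ⟨f, _, hfe⟩ := hsr e 0 (by simpa using hae.symm)
      exact (hconical f e hfe).2
    rw [he0, zero_add] at hexy
    exact hexy
  · intro hcanc
    have h1 : SRCond a 1 := by
      intro x y hxy
      simp only [one_smul] at hxy ⊢
      exact ⟨0, by simp, by rw [zero_add]; exact hcanc x y hxy⟩
    have hmem : (1 : ℕ∞) ∈ {n : ℕ∞ | ∃ m : ℕ, 0 < m ∧ SRCond a m ∧ n = (m : ℕ∞)} :=
      ⟨1, one_pos, h1, by simp⟩
    refine le_antisymm (sInf_le hmem) (le_sInf ?_)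
    rintro b ⟨m, hm, -, rfl⟩
    exact_mod_cast hm
end

section
/- Let M be a commutative additive monoid and a ∈ M a non-unit (i.e., there is no b ∈ M with a + b = 0). If (k+1)·a ≤ k·a in the algebraic order for some positive integer k, then sr(a) = ∞, i.e., a satisfies the n-stable rank condition for no positive integer n. -/
lemma srcond_iter {M : Type*} [AddCommMonoid M] (a z : M) (k n : ℕ)
    (hz : (k + 1) • a + z = k • a) : (n + k) • a + n • z = k • a := by
  induction n with
  | zero => simp
  | succ n ih =>
    calc (n + 1 + k) • a + (n + 1) • z
        = ((n + k) • a + n • z) + (a + z) := by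
          simp only [add_smul, one_smul]; abel
      _ = k • a + (a + z) := by rw [ih]
      _ = (k + 1) • a + z := by rw [succ_nsmul]; abel
      _ = k • a := hz

lemma srcond_unit {M : Type*} [AddCommMonoid M] (a : M) (n : ℕ) (hsr : SRCond a n) :
    ∀ k, (∃ z : M, (k + 1) • a + z = k • a) → ∃ b, a + b = 0 := by
  intro k
  induction k with
  | zero =>
    rintro ⟨z, hz⟩
    exact ⟨z, by simpa using hz⟩
  | succ k ih =>
    rintro ⟨z, hz⟩
    have hiter : (n + (k + 1)) • a + n • z = (k + 1) • a := srcond_iter a z (k + 1) n hz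
    have hx : n • a + ((k + 1) • a + n • z) = a + k • a := by
      have h2 : n • a + ((k + 1) • a + n • z) = (n + (k + 1)) • a + n • z := by
        simp only [add_smul, one_smul]; abel
      rw [h2, hiter, succ_nsmul']
    obtain ⟨e, he1, he2⟩ := hsr _ _ hx
    rcases Nat.eq_zero_or_pos k with rfl | hk
    · refine ⟨e + n • z, ?_⟩
      have : e + ((0 + 1) • a + n • z) = 0 • a := he2
      simpa [one_smul] using by
        calc a + (e + n • z) = e + ((0 + 1) • a + n • z) := by rw [zero_add, one_smul]; abel
        _ = 0 • a := he2
        _ = 0 := zero_smul ℕ a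
    · exact ih ⟨e + n • z, by rw [← he2]; abel⟩

theorem stmt_3 {M : Type*} [AddCommMonoid M] (a : M)
    (ha : ¬ ∃ b : M, a + b = 0) (k : ℕ) (hk : 0 < k)
    (h : ∃ z : M, (k + 1) • a + z = k • a) :
    sr a = ⊤ := by
  have hempty : {n : ℕ∞ | ∃ m : ℕ, 0 < m ∧ SRCond a m ∧ n = (m : ℕ∞)} = ∅ := by
    ext n
    simp only [Set.mem_setOf_eq, Set.mem_empty_iff_false, iff_false]
    rintro ⟨m, hm, hc, rfl⟩
    exact ha (srcond_unit a m hc k h)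
  rw [sr, hempty, sInf_empty]
end

section
/- Let M be a refinement commutative additive monoid, a ∈ M, and n a positive integer. Then the following are equivalent: (a) a satisfies the n-stable rank condition (i.e., sr(a) ≤ n); (b) whenever n·a + x = a + y for some x, y ∈ M, then x ≤ y in the algebraic order; (c) whenever n·a + x = a + y for some x, y ∈ M with x ≤ a and y ≤ n·a, then x ≤ y; (d) whenever n·a = u + v and a = u + w for some u, v, w ∈ M, then w ≤ v. -/
theorem stmt_4 {M : Type*} [AddCommMonoid M]
    (href : ∀ x1 x2 y1 y2 : M, x1 + x2 = y1 + y2 →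
      ∃ z11 z12 z21 z22 : M,
        x1 = z11 + z12 ∧ x2 = z21 + z22 ∧ y1 = z11 + z21 ∧ y2 = z12 + z22)
    (a : M) (n : ℕ) (hn : 0 < n) :
    List.TFAE [SRCond a n,
      ∀ x y : M, n • a + x = a + y → ∃ z : M, x + z = y,
      ∀ x y : M, n • a + x = a + y → (∃ u : M, x + u = a) → (∃ v : M, y + v = n • a) →
        ∃ z : M, x + z = y,
      ∀ u v w : M, n • a = u + v → a = u + w → ∃ z : M, w + z = v] := by
  tfae_have 1 → 2 := by
    intro h x y hxy
    obtain ⟨e, _, he⟩ := h x y hxy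
    exact ⟨e, by rw [add_comm]; exact he⟩
  tfae_have 2 → 3 := by
    intro h x y hxy _ _
    exact h x y hxy
  tfae_have 3 → 4 := by
    intro h u v w h1 h2
    have key : n • a + w = a + v := by rw [h1, h2]; abel
    exact h w v key ⟨u, by rw [add_comm]; exact h2.symm⟩ ⟨u, by rw [add_comm]; exact h1.symm⟩
  tfae_have 4 → 1 := by
    intro h x y hxy
    obtain ⟨z11, z12, z21, z22, e1, e2, e3, e4⟩ := href (n • a) x a y hxy
    obtain ⟨z, hz⟩ := h z11 z12 z21 e1 e3
    refine ⟨z, ?_, ?_⟩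
    · rw [e1, e3, ← hz]; abel
    · rw [e2, e4, ← hz]; abel
  tfae_finish
end

section
/- Let M be a commutative additive monoid, I an o-ideal of M, and a ∈ I. Then sr_I(a) ≤ sr_M(a), where sr_I denotes the stable rank computed inside the monoid I. Moreover, if M is a refinement monoid, then sr_I(a) = sr_M(a). -/
def AddSubmonoid.IsOIdeal {M : Type*} [AddCommMonoid M] (I : AddSubmonoid M) : Prop :=
  ∀ x y : M, y ∈ I → (∃ z : M, x + z = y) → x ∈ I

def IsRefinementMonoid (M : Type*) [AddCommMonoid M] : Prop :=
  ∀ x1 x2 y1 y2 : M, x1 + x2 = y1 + y2 →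
    ∃ z11 z12 z21 z22 : M,
      x1 = z11 + z12 ∧ x2 = z21 + z22 ∧ y1 = z11 + z21 ∧ y2 = z12 + z22

theorem sr_le_sr_of_srCond_imp {M N : Type*} [AddCommMonoid M] [AddCommMonoid N] {a : M} {b : N}
    (h : ∀ n : ℕ, SRCond a n → SRCond b n) : sr b ≤ sr a :=
  sInf_le_sInf fun _ ⟨m, hm, hc, hn⟩ => ⟨m, hm, h m hc, hn⟩

namespace AddSubmonoid.IsOIdeal

variable {M : Type*} [AddCommMonoid M] {I : AddSubmonoid M}

theorem srCond_of_srCond_coe (hI : I.IsOIdeal) {a : I} {n : ℕ} (h : SRCond (a : M) n) :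
    SRCond a n := by
  intro x y hxy
  obtain ⟨e, hae, hex⟩ := h x y (by simpa [Subtype.ext_iff] using hxy)
  refine ⟨⟨e, hI e y y.2 ⟨x, hex⟩⟩, ?_, ?_⟩ <;> simpa [Subtype.ext_iff]

theorem srCond_coe (hI : I.IsOIdeal) (hM : IsRefinementMonoid M) {a : I} {n : ℕ}
    (h : SRCond a n) : SRCond (a : M) n := by
  intro x y hxy
  obtain ⟨z11, z12, z21, z22, hna, rfl, ha, rfl⟩ := hM _ _ _ _ hxy
  have hz12 : z12 ∈ I :=
    hI z12 _ (I.nsmul_mem a.2 n) ⟨z11, by rw [hna, add_comm]⟩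
  have hz21 : z21 ∈ I := hI z21 _ a.2 ⟨z11, by rw [ha, add_comm]⟩
  obtain ⟨e, hae, hez⟩ := h ⟨z21, hz21⟩ ⟨z12, hz12⟩ <| Subtype.ext <| by
    push_cast
    rw [hna, ha, add_right_comm]
  refine ⟨e, by simpa [Subtype.ext_iff] using hae, ?_⟩
  rw [← add_assoc, ← show (e : M) + z21 = z12 from congrArg Subtype.val hez]

theorem sr_le (hI : I.IsOIdeal) (a : I) : sr a ≤ sr (a : M) :=
  sr_le_sr_of_srCond_imp fun _ => hI.srCond_of_srCond_coe

theorem sr_eq (hI : I.IsOIdeal) (hM : IsRefinementMonoid M) (a : I) : sr a = sr (a : M) :=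
  (hI.sr_le a).antisymm <| sr_le_sr_of_srCond_imp fun _ => hI.srCond_coe hM

end AddSubmonoid.IsOIdeal

theorem stmt_5 {M : Type*} [AddCommMonoid M] (I : AddSubmonoid M)
    (hI : ∀ x y : M, y ∈ I → (∃ z : M, x + z = y) → x ∈ I) (a : I) :
    sr a ≤ sr (a : M) ∧
    ((∀ x1 x2 y1 y2 : M, x1 + x2 = y1 + y2 →
        ∃ z11 z12 z21 z22 : M,
          x1 = z11 + z12 ∧ x2 = z21 + z22 ∧ y1 = z11 + z21 ∧ y2 = z12 + z22) →
      sr a = sr (a : M)) := by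
  have hI : I.IsOIdeal := hI
  exact ⟨hI.sr_le a, fun hM => hI.sr_eq hM a⟩
end

section
/- Let M be a commutative additive monoid, a ∈ M, and k, l positive integers with k ≤ l. Then sr(k·a) ≥ sr(l·a). -/
private lemma srcond_aux {M : Type*} [AddCommMonoid M] (a : M) (k d n' : ℕ)
    (h : SRCond (k • a) (n' + 1)) :
    ∀ (m : ℕ) (x y : M),
      ((m + 1) * k + n' * (k + d)) • a + x = ((m + 1) * k) • a + y →
      ∃ e : M, ((n' + 1) * (k + d)) • a = (k + d) • a + e ∧ e + x = y := by
  intro m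
  induction m with
  | zero =>
    intro x y hxy
    have hxy' : (n' + 1) • (k • a) + ((n' * d) • a + x) = k • a + y := by
      rw [smul_smul]
      calc ((n' + 1) * k) • a + ((n' * d) • a + x)
          = ((0 + 1) * k + n' * (k + d)) • a + x := by module
        _ = ((0 + 1) * k) • a + y := hxy
        _ = k • a + y := by module
    obtain ⟨e0, he1, he2⟩ := h _ _ hxy'
    refine ⟨e0 + (n' * d) • a, ?_, ?_⟩
    · calc ((n' + 1) * (k + d)) • a
          = ((n' + 1) * d) • a + (n' + 1) • (k • a) := by rw [smul_smul]; module
        _ = ((n' + 1) * d) • a + (k • a + e0) := by rw [he1]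
        _ = (k + d) • a + (e0 + (n' * d) • a) := by module
    · rw [add_assoc]; exact he2
  | succ m ih =>
    intro x y hxy
    have hxy' : (n' + 1) • (k • a) + (((m + 1) * k + n' * d) • a + x)
        = k • a + (((m + 1) * k) • a + y) := by
      rw [smul_smul]
      calc ((n' + 1) * k) • a + (((m + 1) * k + n' * d) • a + x)
          = ((m + 1 + 1) * k + n' * (k + d)) • a + x := by module
        _ = ((m + 1 + 1) * k) • a + y := hxy
        _ = k • a + (((m + 1) * k) • a + y) := by module
    obtain ⟨e0, he1, he2⟩ := h _ _ hxy'
    apply ih x y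
    calc ((m + 1) * k + n' * (k + d)) • a + x
        = (m * k + n' * d) • a + ((n' + 1) • (k • a) + x) := by rw [smul_smul]; module
      _ = (m * k + n' * d) • a + ((k • a + e0) + x) := by rw [he1]
      _ = e0 + (((m + 1) * k + n' * d) • a + x) := by module
      _ = ((m + 1) * k) • a + y := he2

private lemma srcond_smul_mono {M : Type*} [AddCommMonoid M] (a : M) (k l n : ℕ)
    (hk : 0 < k) (hkl : k ≤ l) (hn : 0 < n) (h : SRCond (k • a) n) :
    SRCond (l • a) n := by
  obtain ⟨n', rfl⟩ : ∃ n', n = n' + 1 := ⟨n - 1, by omega⟩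
  obtain ⟨d, rfl⟩ : ∃ d, l = k + d := ⟨l - k, by omega⟩
  obtain ⟨K, rfl⟩ : ∃ K, k = K + 1 := ⟨k - 1, by omega⟩
  intro x y hxy
  have hpad : ((K + d + 1) * (K + 1) + n' * ((K + 1) + d)) • a + x
      = ((K + d + 1) * (K + 1)) • a + y := by
    calc ((K + d + 1) * (K + 1) + n' * ((K + 1) + d)) • a + x
        = ((K + 1 + d) * K) • a + (((n' + 1) * (K + 1 + d)) • a + x) := by module
      _ = ((K + 1 + d) * K) • a + ((n' + 1) • ((K + 1 + d) • a) + x) := by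
          rw [smul_smul]
      _ = ((K + 1 + d) * K) • a + ((K + 1 + d) • a + y) := by rw [hxy]
      _ = ((K + d + 1) * (K + 1)) • a + y := by module
  obtain ⟨e, he1, he2⟩ := srcond_aux a (K + 1) d n' h (K + d) x y hpad
  refine ⟨e, ?_, he2⟩
  rw [smul_smul]
  exact he1

theorem stmt_6 {M : Type*} [AddCommMonoid M] (a : M) (k l : ℕ)
    (hk : 0 < k) (hkl : k ≤ l) :
    sr (l • a) ≤ sr (k • a) := by
  refine sInf_le_sInf ?_
  rintro n ⟨m, hm, hc, rfl⟩
  exact ⟨m, hm, srcond_smul_mono a k l m hk hkl hm hc, rfl⟩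
end

section
/- Let M be a commutative additive monoid and a ∈ M with sr(a) = n < ∞. Then for every integer k ≥ n, the element k·a is Hermite; in particular, k·a is self-cancellative and sr(k·a) ≤ 2 for all k ≥ n. -/
theorem SRCond.mono {M : Type*} [AddCommMonoid M] {a : M} {m k : ℕ} (hmk : m ≤ k)
    (h : SRCond a m) : SRCond a k := by
  obtain ⟨j, rfl⟩ : ∃ j, k = m + j := ⟨k - m, by omega⟩
  intro x y hxy
  have h1 : m • a + (j • a + x) = a + y := by
    rw [← add_assoc, ← add_nsmul]; exact hxy
  obtain ⟨e, he, hexy⟩ := h _ _ h1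
  refine ⟨j • a + e, ?_, ?_⟩
  · rw [add_nsmul, he]; abel
  · rw [add_assoc, add_comm, add_assoc, add_comm x, hexy]

theorem SRCond.descent {M : Type*} [AddCommMonoid M] {a : M} {k : ℕ} (hk : SRCond a k)
    (x y : M) (H : (2 * k) • a + x = k • a + y) :
    ∀ i, i ≤ k → (2 * k - i) • a + x = (k - i) • a + y := by
  intro i
  induction i with
  | zero => simpa using H
  | succ i ih =>
    intro hik
    have P := ih (by omega)
    have e1 : 2 * k - i = k + (k - i) := by omega
    have e2 : k - i = 1 + (k - (i + 1)) := by omega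
    have h1 : k • a + ((k - i) • a + x) = a + ((k - (i + 1)) • a + y) := by
      rw [← add_assoc, ← add_nsmul, ← e1, P, e2, add_nsmul, one_nsmul, add_assoc]
    obtain ⟨e, he, hexy⟩ := hk _ _ h1
    have e3 : 2 * k - (i + 1) = k + (k - (i + 1)) := by omega
    calc (2 * k - (i + 1)) • a + x
        = k • a + ((k - (i + 1)) • a + x) := by rw [e3, add_nsmul, add_assoc]
      _ = e + ((k - i) • a + x) := by rw [he, e2, add_nsmul, one_nsmul]; abel
      _ = (k - (i + 1)) • a + y := hexy

theorem stmt_7 {M : Type*} [AddCommMonoid M] (a : M) (n : ℕ) (hn : 0 < n)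
    (h : sr a = (n : ℕ∞)) :
    ∀ k : ℕ, n ≤ k →
      (∀ x y : M, 2 • (k • a) + x = k • a + y → k • a + x = y) ∧
      (∀ y : M, 2 • (k • a) = k • a + y → k • a = y) ∧
      sr (k • a) ≤ 2 := by
  -- extract some m ≤ n with SRCond a m
  have hlt : sInf {c : ℕ∞ | ∃ m : ℕ, 0 < m ∧ SRCond a m ∧ c = (m : ℕ∞)} < ((n + 1 : ℕ) : ℕ∞) := by
    rw [← sr, h]; exact_mod_cast Nat.lt_succ_self n
  rw [sInf_lt_iff] at hlt
  obtain ⟨c, ⟨m, hm0, hmcond, rfl⟩, hcn⟩ := hlt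
  have hmn : m ≤ n := by
    have : m < n + 1 := by exact_mod_cast hcn
    omega
  intro k hk
  have hkcond : SRCond a k := hmcond.mono (le_trans hmn hk)
  have hermite : ∀ x y : M, 2 • (k • a) + x = k • a + y → k • a + x = y := by
    intro x y hxy
    have H : (2 * k) • a + x = k • a + y := by
      rw [mul_comm 2 k, mul_nsmul]; exact hxy
    have := hkcond.descent x y H k le_rfl
    rw [show 2 * k - k = k by omega, Nat.sub_self, zero_nsmul, zero_add] at this
    exact this
  refine ⟨hermite, ?_, ?_⟩
  · intro y hy
    have := hermite 0 y (by rw [add_zero]; exact hy)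
    simpa using this
  · have h2 : SRCond (k • a) 2 := by
      intro x y hxy
      exact ⟨k • a, two_nsmul (k • a), hermite x y hxy⟩
    exact sInf_le ⟨2, by norm_num, h2, rfl⟩
end

section
/- Let M be a commutative additive monoid and a, b ∈ M with a ≤ b ≤ n·b' where b' = a, i.e., a ≤ b ≤ n·a in the algebraic order for some positive integer n. Then sr(b) ≤ sr(a). -/
/-! Write `b = a + z` and `b + w = n • a`. If `(m + 1) • b + x = b + y`, one application of the
condition for `a` moves the extra copies of `z` to the right; adding `a + w` turns the equation
into `(m + 1) • a + (n • a + X) = a + (n • a + y)` with `X = m • z + x`. The condition for `a`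
cancels the summands `a` of `n • a` one at a time, and a last application to
`(m + 1) • a + X = a + y` produces the witness for `b`. -/

namespace SRCond

variable {M : Type*} [AddCommMonoid M] {a : M} {m : ℕ}

theorem cancel_left_add (h : SRCond a m) {x y : M} (hxy : m • a + (a + x) = a + (a + y)) :
    m • a + x = a + y := by
  obtain ⟨e, he, he'⟩ := h _ _ hxy
  rw [he, add_assoc, ← he', add_left_comm]

theorem cancel_left_nsmul (h : SRCond a m) (k : ℕ) {x y : M}
    (hxy : m • a + (k • a + x) = a + (k • a + y)) : m • a + x = a + y := by
  induction k generalizing x y with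
  | zero => simpa using hxy
  | succ k ih =>
    simp only [succ_nsmul, add_assoc] at hxy
    exact h.cancel_left_add (ih hxy)

theorem of_add_eq_of_add_eq_nsmul (h : SRCond a (m + 1)) {b z w : M} {n : ℕ}
    (hab : a + z = b) (hbn : b + w = n • a) : SRCond b (m + 1) := by
  subst hab
  intro x y hxy
  have h₁ : (m + 1) • a + (z + (m • z + x)) = a + (z + y) :=
    calc (m + 1) • a + (z + (m • z + x))
        = (m + 1) • (a + z) + x := by rw [smul_add, succ_nsmul' z]; abel
      _ = a + (z + y) := by rw [hxy, add_assoc]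
  obtain ⟨e₀, he₀, he₀'⟩ := h _ _ h₁
  have h₂ : (m + 1) • a + (n • a + (m • z + x)) = a + (n • a + y) :=
    calc (m + 1) • a + (n • a + (m • z + x))
        = a + (a + w) + (e₀ + (z + (m • z + x))) := by rw [he₀, ← hbn]; abel
      _ = a + (n • a + y) := by rw [he₀', ← hbn]; abel
  obtain ⟨e, he, he'⟩ := h _ _ (h.cancel_left_nsmul n h₂)
  refine ⟨e + m • z, ?_, by rw [add_assoc, he']⟩
  rw [smul_add, he, succ_nsmul' z]
  abel

end SRCond

theorem sr_le_sr_of_forall_srCond {M : Type*} [AddCommMonoid M] {a b : M}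
    (h : ∀ m : ℕ, SRCond a (m + 1) → SRCond b (m + 1)) : sr b ≤ sr a := by
  apply sInf_le_sInf
  rintro _ ⟨m, hm, hcond, rfl⟩
  obtain ⟨m, rfl⟩ := Nat.exists_eq_add_of_lt hm
  exact ⟨_, hm, h _ (by simpa using hcond), rfl⟩

theorem stmt_8_general {M : Type*} [AddCommMonoid M] (a b : M) (n : ℕ)
    (hab : ∃ z : M, a + z = b) (hbn : ∃ z : M, b + z = n • a) :
    sr b ≤ sr a := by
  obtain ⟨z, hz⟩ := hab
  obtain ⟨w, hw⟩ := hbn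
  exact sr_le_sr_of_forall_srCond fun _ h => h.of_add_eq_of_add_eq_nsmul hz hw

theorem stmt_8 {M : Type*} [AddCommMonoid M] (a b : M) (n : ℕ) (hn : 0 < n)
    (hab : ∃ z : M, a + z = b) (hbn : ∃ z : M, b + z = n • a) :
    sr b ≤ sr a :=
  stmt_8_general a b n hab hbn
end

section
/- Let M be a commutative additive monoid, a ∈ M, and m a positive integer. Then sr(a) ≤ m · sr(m·a), with the convention m · ∞ = ∞. -/
section StableRank

variable {M : Type*} [AddCommMonoid M] {a : M}

/- Adding `(m - 1) • a` to both sides of `(m * n) • a + x = a + y` gives an instance of the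
`n`-condition for `m • a`; its witness, shifted by `(m - 1) • a`, works for `a`. -/
theorem SRCond.of_nsmul {m n : ℕ} (hm : m ≠ 0) (h : SRCond (m • a) n) :
    SRCond a (m * n) := by
  obtain ⟨k, rfl⟩ := Nat.exists_eq_add_one_of_ne_zero hm
  intro x y hxy
  have hshift : n • ((k + 1) • a) + (x + k • a) = (k + 1) • a + y := by
    rw [← mul_nsmul, succ_nsmul', ← add_assoc, hxy]
    abel
  obtain ⟨e, he, hey⟩ := h (x + k • a) y hshift
  refine ⟨e + k • a, ?_, ?_⟩
  · rw [mul_nsmul, he, succ_nsmul']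
    abel
  · rw [← hey]
    abel

theorem sr_le_of_srCond {n : ℕ} (hn : 0 < n) (h : SRCond a n) : sr a ≤ n :=
  sInf_le ⟨n, hn, h, rfl⟩

theorem exists_srCond_of_sr_ne_top (h : sr a ≠ ⊤) :
    ∃ n : ℕ, 0 < n ∧ SRCond a n ∧ sr a = n := by
  have hne : {n : ℕ∞ | ∃ m : ℕ, 0 < m ∧ SRCond a m ∧ n = (m : ℕ∞)}.Nonempty := by
    by_contra hempty
    exact h (by rw [sr, Set.not_nonempty_iff_eq_empty.mp hempty, sInf_empty])
  exact csInf_mem hne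

end StableRank

theorem stmt_9 {M : Type*} [AddCommMonoid M] (a : M) (m : ℕ) (hm : 0 < m) :
    sr a ≤ (m : ℕ∞) * sr (m • a) := by
  by_cases htop : sr (m • a) = ⊤
  · rw [htop, ENat.mul_top (by exact_mod_cast hm.ne')]
    exact le_top
  obtain ⟨n, hn, hcond, hsr⟩ := exists_srCond_of_sr_ne_top htop
  rw [hsr, ← Nat.cast_mul]
  exact sr_le_of_srCond (Nat.mul_pos hm hn) (hcond.of_nsmul hm.ne')
end

section
/- Let M be a refinement commutative additive monoid and a ∈ M with sr(a) = n < ∞. Then for every positive integer l, sr(l·a) = 1 + ⌈(n−1)/l⌉. -/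
section Aux

variable {M : Type*} [AddCommMonoid M]

/-- Generalized stable rank condition with `q • a` on the right-hand side. -/
def QCond (a : M) (p q : ℕ) : Prop :=
  ∀ x y : M, p • a + x = q • a + y → ∃ e : M, p • a = q • a + e ∧ e + x = y

lemma srCond_iff_qcond_one {a : M} {p : ℕ} : SRCond a p ↔ QCond a p 1 := by
  simp [SRCond, QCond, one_nsmul]

lemma srCond_smul_iff {a : M} {m l : ℕ} : SRCond (l • a) m ↔ QCond a (m * l) l := by
  have hms : (m * l) • a = m • l • a := by
    rw [mul_comm]
    exact mul_nsmul a l m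
  unfold SRCond QCond
  rw [hms]

lemma qcond_succ {a : M} {p q : ℕ} (h : QCond a p q) : QCond a (p + 1) q := by
  intro x y hxy
  have hxy' : p • a + (a + x) = q • a + y := by
    rw [← hxy, succ_nsmul]; abel
  obtain ⟨e, he1, he2⟩ := h _ _ hxy'
  refine ⟨e + a, ?_, ?_⟩
  · rw [succ_nsmul, he1]; abel
  · rw [← he2]; abel

lemma qcond_base {a : M} {n : ℕ} (h : SRCond a n) (t : ℕ) : QCond a (n + t) (t + 1) := by
  induction t with
  | zero => exact srCond_iff_qcond_one.mp h
  | succ t ih =>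
    intro x y hxy
    have e1 : (n + (t + 1)) • a = n • a + (t + 1) • a := add_nsmul a n (t + 1)
    have e2 : (t + 1 + 1) • a = (t + 1) • a + a := succ_nsmul a (t + 1)
    have h1 : n • a + ((t + 1) • a + x) = a + ((t + 1) • a + y) := by
      rw [e1, e2] at hxy
      calc n • a + ((t + 1) • a + x) = n • a + (t + 1) • a + x := by abel
        _ = (t + 1) • a + a + y := hxy
        _ = a + ((t + 1) • a + y) := by abel
    obtain ⟨f, hf1, hf2⟩ := h _ _ h1
    have h2 : (n + t) • a + x = (t + 1) • a + y := by
      calc (n + t) • a + x = n • a + t • a + x := by rw [add_nsmul]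
        _ = (a + f) + t • a + x := by rw [hf1]
        _ = f + ((t + 1) • a + x) := by rw [succ_nsmul a t]; abel
        _ = (t + 1) • a + y := hf2
    obtain ⟨e, he3, he4⟩ := ih x y h2
    refine ⟨e, ?_, he4⟩
    calc (n + (t + 1)) • a = (n + t) • a + a := succ_nsmul a (n + t)
      _ = ((t + 1) • a + e) + a := by rw [he3]
      _ = (t + 1 + 1) • a + e := by rw [succ_nsmul a (t + 1)]; abel

lemma qcond_of_le {a : M} {n p q : ℕ} (h : SRCond a n) (hq : 1 ≤ q) (hp : n + q ≤ p + 1) :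
    QCond a p q := by
  obtain ⟨t, rfl⟩ : ∃ t, q = t + 1 := ⟨q - 1, by omega⟩
  obtain ⟨s, rfl⟩ : ∃ s, p = n + t + s := ⟨p - (n + t), by omega⟩
  clear hp hq
  induction s with
  | zero => exact qcond_base h t
  | succ s ih => exact qcond_succ ih

lemma qcond_descend
    (href : ∀ x1 x2 y1 y2 : M, x1 + x2 = y1 + y2 →
      ∃ z11 z12 z21 z22 : M,
        x1 = z11 + z12 ∧ x2 = z21 + z22 ∧ y1 = z11 + z21 ∧ y2 = z12 + z22)
    {a : M} {p q : ℕ} (h : QCond a (p + 1) (q + 1 + 1)) : QCond a p (q + 1) := by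
  intro x y hxy
  obtain ⟨A, B, C, D, hA, hx, hq, hy⟩ := href (p • a) x ((q + 1) • a) y hxy
  have e2 : (q + 1 + 1) • a = (q + 1) • a + a := succ_nsmul a (q + 1)
  have key : (p + 1) • a + C = (q + 1 + 1) • a + B := by
    calc (p + 1) • a + C = p • a + a + C := by rw [succ_nsmul]
      _ = (A + B) + a + C := by rw [hA]
      _ = (A + C) + a + B := by abel
      _ = (q + 1) • a + a + B := by rw [← hq]
      _ = (q + 1 + 1) • a + B := by rw [e2]
  obtain ⟨f, _hf1, hf2⟩ := h C B key
  refine ⟨f, ?_, ?_⟩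
  · calc p • a = A + B := hA
      _ = A + (f + C) := by rw [hf2]
      _ = (A + C) + f := by abel
      _ = (q + 1) • a + f := by rw [← hq]
  · rw [hx, hy, ← hf2]; abel

lemma qcond_descend_iter
    (href : ∀ x1 x2 y1 y2 : M, x1 + x2 = y1 + y2 →
      ∃ z11 z12 z21 z22 : M,
        x1 = z11 + z12 ∧ x2 = z21 + z22 ∧ y1 = z11 + z21 ∧ y2 = z12 + z22)
    {a : M} (j : ℕ) :
    ∀ p q : ℕ, QCond a (p + j) (q + 1 + j) → QCond a p (q + 1) := by
  induction j with
  | zero => exact fun p q h => h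
  | succ j ih =>
    intro p q h
    have e2 : q + 1 + (j + 1) = q + j + 1 + 1 := by omega
    rw [e2] at h
    have h2 : QCond a (p + j) (q + j + 1) := qcond_descend href h
    have e3 : q + j + 1 = q + 1 + j := by omega
    rw [e3] at h2
    exact ih p q h2

lemma sr_eq_of {a : M} {n : ℕ} (h1 : SRCond a n) (hn : 0 < n)
    (h2 : ∀ m : ℕ, 0 < m → SRCond a m → n ≤ m) : sr a = (n : ℕ∞) := by
  unfold sr
  refine le_antisymm (sInf_le ⟨n, hn, h1, rfl⟩) (le_sInf ?_)
  rintro b ⟨m, hm, hc, rfl⟩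
  exact_mod_cast h2 m hm hc

lemma srCond_of_sr_eq {a : M} {n : ℕ} (h : sr a = (n : ℕ∞)) : SRCond a n := by
  unfold sr at h
  have hne : {b : ℕ∞ | ∃ m : ℕ, 0 < m ∧ SRCond a m ∧ b = (m : ℕ∞)}.Nonempty := by
    by_contra hS
    rw [Set.not_nonempty_iff_eq_empty] at hS
    rw [hS, sInf_empty] at h
    exact (ENat.coe_ne_top n) h.symm
  obtain ⟨b, m1, hm1, hc1, rfl⟩ := hne
  obtain ⟨m0, hm0⟩ : ∃ m0 : ℕ, m0 = sInf {m : ℕ | 0 < m ∧ SRCond a m} := ⟨_, rfl⟩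
  have hmem : m0 ∈ {m : ℕ | 0 < m ∧ SRCond a m} := by
    rw [hm0]; exact Nat.sInf_mem ⟨m1, ⟨hm1, hc1⟩⟩
  have hle : sInf {b : ℕ∞ | ∃ m : ℕ, 0 < m ∧ SRCond a m ∧ b = (m : ℕ∞)} ≤ (m0 : ℕ∞) :=
    sInf_le ⟨m0, hmem.1, hmem.2, rfl⟩
  have hge : (m0 : ℕ∞)
      ≤ sInf {b : ℕ∞ | ∃ m : ℕ, 0 < m ∧ SRCond a m ∧ b = (m : ℕ∞)} := by
    refine le_sInf ?_
    rintro b ⟨m, hm, hc, rfl⟩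
    have : m0 ≤ m := by rw [hm0]; exact Nat.sInf_le ⟨hm, hc⟩
    exact_mod_cast this
  have heq : (m0 : ℕ∞) = (n : ℕ∞) :=
    le_antisymm (hge.trans (le_of_eq h)) (h.symm.trans_le hle)
  have hmn : m0 = n := by exact_mod_cast heq
  rw [← hmn]
  exact hmem.2

lemma le_of_sr_eq {a : M} {n : ℕ} (h : sr a = (n : ℕ∞)) {m : ℕ} (hm : 0 < m)
    (hc : SRCond a m) : n ≤ m := by
  have hle : sr a ≤ (m : ℕ∞) := by
    unfold sr
    exact sInf_le ⟨m, hm, hc, rfl⟩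
  rw [h] at hle
  exact_mod_cast hle

lemma nat_le_ceil_mul (x l : ℕ) (hl : 0 < l) : x ≤ (x + (l - 1)) / l * l := by
  obtain ⟨D, hD⟩ : ∃ D, (x + (l - 1)) / l = D := ⟨_, rfl⟩
  obtain ⟨r, hr⟩ : ∃ r, (x + (l - 1)) % l = r := ⟨_, rfl⟩
  have h1 : l * D + r = x + (l - 1) := by rw [← hD, ← hr]; exact Nat.div_add_mod _ _
  have h2 : r < l := by rw [← hr]; exact Nat.mod_lt _ hl
  rw [hD, Nat.mul_comm]
  obtain ⟨P, hP⟩ : ∃ P, l * D = P := ⟨_, rfl⟩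
  rw [hP] at h1 ⊢
  omega

lemma nat_ceil_le (x l t : ℕ) (hl : 0 < l) (h : x ≤ l * t) : (x + (l - 1)) / l ≤ t := by
  calc (x + (l - 1)) / l ≤ (l * t + (l - 1)) / l :=
        Nat.div_le_div_right (Nat.add_le_add_right h _)
    _ = t + (l - 1) / l := Nat.mul_add_div hl t (l - 1)
    _ = t := by rw [Nat.div_eq_of_lt (by omega)]; omega

end Aux

theorem stmt_12 {M : Type*} [AddCommMonoid M]
    (href : ∀ x1 x2 y1 y2 : M, x1 + x2 = y1 + y2 →
      ∃ z11 z12 z21 z22 : M,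
        x1 = z11 + z12 ∧ x2 = z21 + z22 ∧ y1 = z11 + z21 ∧ y2 = z12 + z22)
    (a : M) (n : ℕ) (hn : 0 < n) (h : sr a = (n : ℕ∞)) (l : ℕ) (hl : 0 < l) :
    sr (l • a) = ((1 + (n - 1 + (l - 1)) / l : ℕ) : ℕ∞) := by
  have hcond : SRCond a n := srCond_of_sr_eq h
  obtain ⟨D, hD⟩ : ∃ D, (n - 1 + (l - 1)) / l = D := ⟨_, rfl⟩
  rw [hD]
  refine sr_eq_of ?_ (by omega) ?_
  · -- SRCond (l • a) (1 + D)
    refine srCond_smul_iff.mpr (qcond_of_le hcond hl ?_)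
    -- n + l ≤ (1 + D) * l + 1
    have hD1 : n - 1 ≤ D * l := by
      have := nat_le_ceil_mul (n - 1) l hl
      rwa [hD] at this
    have hE : (1 + D) * l = l + D * l := by ring
    obtain ⟨P, hP⟩ : ∃ P, D * l = P := ⟨_, rfl⟩
    rw [hP] at hD1 hE
    rw [hE]
    omega
  · intro m hm hc
    have hQ : QCond a (m * l) l := srCond_smul_iff.mp hc
    have hml : l ≤ m * l := Nat.le_mul_of_pos_left l hm
    obtain ⟨m', rfl⟩ : ∃ m', m = m' + 1 := ⟨m - 1, by omega⟩
    have hexp : (m' + 1) * l = l * m' + l := by ring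
    obtain ⟨P, hP⟩ : ∃ P, l * m' = P := ⟨_, rfl⟩
    rw [hexp, hP] at hQ hml
    have e1 : P + l - (l - 1) + (l - 1) = P + l := by omega
    have e2 : 0 + 1 + (l - 1) = l := by omega
    have h' : QCond a (P + l - (l - 1) + (l - 1)) (0 + 1 + (l - 1)) := by
      rw [e1, e2]; exact hQ
    have hS : SRCond a (P + l - (l - 1)) :=
      srCond_iff_qcond_one.mpr (qcond_descend_iter href (l - 1) _ _ h')
    have hnle : n ≤ P + l - (l - 1) := le_of_sr_eq h (by omega) hS
    have hx : n - 1 ≤ l * m' := by rw [hP]; omega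
    have hDle : D ≤ m' := hD ▸ nat_ceil_le (n - 1) l m' hl hx
    omega
end

section
/- Let M be a commutative additive monoid and a ∈ M with sr(a) = n < ∞. If k is an integer with k ≥ 2 and n ≥ max(2, k(k−1)(k−2)), then there exists a positive integer l such that sr(l·a) = k. -/
/-!
Let `t q` be the least `p` such that `p • a` satisfies the stable rank condition relative to
`q • a`. Since `SRCond (l • a) m` says exactly that `t l ≤ m * l`, the stable rank of `l • a`
is `⌈t l / l⌉`. From `sr a = n` one gets `n ≤ t l ≤ n + l - 1` for `l ≥ 1`, and `t` is
monotone. Take the least `l ≥ k - 1` with `t l ≤ k * l` (e.g. `l = n` qualifies). If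
`l = k - 1`, then `t l ≥ n > (k - 1)²`; otherwise minimality and monotonicity give
`t l ≥ t (l - 1) > k * (l - 1) ≥ (k - 1) * l`. Either way `sr (l • a) = k`.
-/

section StableRank

variable {M : Type*} [AddCommMonoid M]

theorem sr_eq_coe_iff {a : M} {n : ℕ} :
    sr a = n ↔ 0 < n ∧ SRCond a n ∧ ∀ m, 0 < m → SRCond a m → n ≤ m := by
  set S := {n : ℕ∞ | ∃ m : ℕ, 0 < m ∧ SRCond a m ∧ n = (m : ℕ∞)}
  have hleast : IsLeast S n ↔ 0 < n ∧ SRCond a n ∧ ∀ m, 0 < m → SRCond a m → n ≤ m := by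
    refine ⟨fun ⟨⟨m, hm, hcond, hnm⟩, hmin⟩ => ?_, fun ⟨hn, hcond, hmin⟩ => ?_⟩
    · obtain rfl : n = m := by exact_mod_cast hnm
      exact ⟨hm, hcond, fun k hk hk' => by exact_mod_cast hmin ⟨k, hk, hk', rfl⟩⟩
    · exact ⟨⟨n, hn, hcond, rfl⟩,
        fun _ ⟨m, hm, hm', hbm⟩ => hbm ▸ by exact_mod_cast hmin m hm hm'⟩
  rw [← hleast]
  refine ⟨fun h => ?_, IsLeast.csInf_eq⟩
  have hne : S.Nonempty := by
    by_contra hS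
    simp [sr, S, Set.not_nonempty_iff_eq_empty.1 hS] at h
  exact h ▸ ⟨csInf_mem hne, fun _ hb => csInf_le' hb⟩

/-- `SRCond a n` is `SRDiv (n • a) a`. -/
def SRDiv (b c : M) : Prop :=
  ∀ x y : M, b + x = c + y → ∃ f : M, b = c + f ∧ f + x = y

theorem SRDiv.zero_right (b : M) : SRDiv b 0 :=
  fun x y hxy => ⟨b, (zero_add b).symm, by rwa [zero_add] at hxy⟩

theorem SRDiv.add_left {b c : M} (h : SRDiv b c) (d : M) : SRDiv (d + b) c := by
  intro x y hxy
  obtain ⟨f, rfl, hf⟩ := h (d + x) y (by rw [← hxy]; abel)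
  exact ⟨f + d, by abel, by rw [← hf]; abel⟩

theorem SRDiv.of_add_right {b c d : M} (h : SRDiv b (c + d)) : SRDiv b c := by
  intro x y hxy
  obtain ⟨f, rfl, hf⟩ := h (d + x) y (by rw [← add_assoc, add_right_comm, hxy]; abel)
  exact ⟨d + f, by abel, by rw [← hf]; abel⟩

theorem SRDiv.nsmul_mono {a c : M} {p p' : ℕ} (h : SRDiv (p • a) c) (hp : p ≤ p') :
    SRDiv (p' • a) c := by
  simpa [← add_nsmul, Nat.sub_add_cancel hp] using h.add_left ((p' - p) • a)

theorem srCond_nsmul_iff_srDiv {a : M} {l m : ℕ} :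
    SRCond (l • a) m ↔ SRDiv ((m * l) • a) (l • a) := by
  rw [mul_nsmul']; rfl

theorem SRCond.srDiv_add_nsmul {a : M} {N : ℕ} (h : SRCond a N) (q : ℕ) :
    SRDiv ((N + q) • a) ((q + 1) • a) := by
  induction q with
  | zero => rw [add_zero, zero_add, one_nsmul]; exact h
  | succ q ih =>
    intro x y hxy
    obtain ⟨e, he, hex⟩ := h ((q + 1) • a + x) ((q + 1) • a + y) (by
      convert hxy using 1 <;> simp only [add_nsmul, one_nsmul] <;> abel)
    obtain ⟨f, hf, rfl⟩ := ih x y (by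
      rw [← hex, add_nsmul, he]; simp only [add_nsmul, one_nsmul]; abel)
    refine ⟨f, ?_, rfl⟩
    rw [← add_assoc, add_nsmul, hf]; simp only [add_nsmul, one_nsmul]; abel

/-- The least `p` with `SRDiv (p • a) (q • a)` (junk value `0` if there is none). -/
noncomputable def srThreshold (a : M) (q : ℕ) : ℕ :=
  sInf {p : ℕ | SRDiv (p • a) (q • a)}

variable {a : M} {N : ℕ}

theorem SRCond.srDiv_iff_srThreshold_le (hN : SRCond a N) {q p : ℕ} :
    SRDiv (p • a) (q • a) ↔ srThreshold a q ≤ p := by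
  have hne : {p : ℕ | SRDiv (p • a) (q • a)}.Nonempty := by
    cases q with
    | zero => exact ⟨0, by rw [zero_nsmul]; exact SRDiv.zero_right _⟩
    | succ q => exact ⟨N + q, hN.srDiv_add_nsmul q⟩
  exact ⟨fun h => Nat.sInf_le h, fun h => (Nat.sInf_mem hne).nsmul_mono h⟩

theorem SRCond.srThreshold_succ_le (hN : SRCond a N) (q : ℕ) : srThreshold a (q + 1) ≤ N + q :=
  hN.srDiv_iff_srThreshold_le.1 (hN.srDiv_add_nsmul q)

theorem SRCond.monotone_srThreshold (hN : SRCond a N) : Monotone (srThreshold a) := by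
  refine monotone_nat_of_le_succ fun q => hN.srDiv_iff_srThreshold_le.1 ?_
  have h := hN.srDiv_iff_srThreshold_le.2 (le_refl (srThreshold a (q + 1)))
  rw [succ_nsmul] at h
  exact h.of_add_right

theorem SRCond.srCond_nsmul_iff (hN : SRCond a N) {l m : ℕ} :
    SRCond (l • a) m ↔ srThreshold a l ≤ m * l :=
  srCond_nsmul_iff_srDiv.trans hN.srDiv_iff_srThreshold_le

theorem le_srThreshold {n q : ℕ} (h : sr a = n) (hn : 2 ≤ n) (hq : 0 < q) :
    n ≤ srThreshold a q := by
  obtain ⟨-, hcond, hmin⟩ := sr_eq_coe_iff.1 h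
  have hcond' : SRCond a (max (srThreshold a 1) 1) := by
    simpa using (hcond.srCond_nsmul_iff (l := 1)).2 (by simp)
  calc n ≤ srThreshold a 1 := by have := hmin _ (by positivity) hcond'; omega
    _ ≤ srThreshold a q := hcond.monotone_srThreshold hq

theorem SRCond.sr_nsmul_eq (hN : SRCond a N) {l k : ℕ} (hk : 0 < k)
    (hlow : (k - 1) * l < srThreshold a l) (hup : srThreshold a l ≤ k * l) : sr (l • a) = k := by
  refine sr_eq_coe_iff.2 ⟨hk, hN.srCond_nsmul_iff.2 hup, fun m _ hcond => ?_⟩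
  have : k - 1 < m := Nat.lt_of_mul_lt_mul_right (hlow.trans_le (hN.srCond_nsmul_iff.1 hcond))
  omega

end StableRank

theorem Monotone.exists_mul_lt_le_mul {t : ℕ → ℕ} (ht : Monotone t) {k : ℕ} (hk : 2 ≤ k)
    (hlow : (k - 1) * (k - 1) < t (k - 1)) (hup : ∃ L, k - 1 ≤ L ∧ t L ≤ k * L) :
    ∃ l, 0 < l ∧ (k - 1) * l < t l ∧ t l ≤ k * l := by
  classical
  obtain ⟨hkl, htl⟩ := Nat.find_spec hup
  refine ⟨Nat.find hup, by omega, ?_, htl⟩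
  rcases hkl.eq_or_lt with heq | hlt
  · rwa [← heq]
  obtain ⟨m, hm⟩ : ∃ m, Nat.find hup = m + 1 := ⟨Nat.find hup - 1, by omega⟩
  have hprev : k * m < t m := by
    have := Nat.find_min hup (show m < Nat.find hup by omega)
    push Not at this
    exact this (by omega)
  obtain ⟨j, rfl⟩ : ∃ j, k = j + 1 := ⟨k - 1, by omega⟩
  have hjm : j ≤ m := by omega
  rw [hm]
  calc (j + 1 - 1) * (m + 1) ≤ (j + 1) * m := by rw [Nat.add_sub_cancel]; nlinarith
    _ < t m := hprev
    _ ≤ t (m + 1) := ht (Nat.le_succ m)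

theorem stmt_13 {M : Type*} [AddCommMonoid M] (a : M) (n k : ℕ)
    (h : sr a = (n : ℕ∞)) (hk : 2 ≤ k)
    (hn : max 2 (k * (k - 1) * (k - 2)) ≤ n) :
    ∃ l : ℕ, 0 < l ∧ sr (l • a) = (k : ℕ∞) := by
  obtain ⟨-, hcond, -⟩ := sr_eq_coe_iff.1 h
  have hn2 : 2 ≤ n := le_of_max_le_left hn
  have hkn : (k - 1) * (k - 1) < n := by
    refine lt_of_lt_of_le ?_ hn
    obtain ⟨j, rfl⟩ : ∃ j, k = j + 2 := ⟨k - 2, by omega⟩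
    simp only [Nat.add_sub_cancel, show j + 2 - 1 = j + 1 by omega]
    rcases j with _ | j
    · simp
    · exact lt_max_of_lt_right (by nlinarith)
  have hthreshold : srThreshold a n ≤ k * n := by
    obtain ⟨m, rfl⟩ : ∃ m, n = m + 1 := ⟨n - 1, by omega⟩
    calc srThreshold a (m + 1) ≤ (m + 1) + m := hcond.srThreshold_succ_le m
      _ ≤ k * (m + 1) := by nlinarith
  obtain ⟨l, hl, hlow, hup⟩ := hcond.monotone_srThreshold.exists_mul_lt_le_mul hk
    (hkn.trans_le (le_srThreshold h hn2 (by omega)))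
    ⟨n, (Nat.le_mul_self _).trans hkn.le, hthreshold⟩
  exact ⟨l, hl, hcond.sr_nsmul_eq (by omega) hlow hup⟩
end

section
/- Let M be a separative commutative additive monoid and a ∈ M. Then the following are equivalent: (i) sr(a) < ∞; (ii) sr(a) ≤ 2; (iii) a is Hermite. Consequently, every element of a separative commutative monoid has stable rank 1, 2, or ∞. -/
def IsSeparative (M : Type*) [AddCommMonoid M] : Prop :=
  ∀ x y : M, 2 • x = x + y → x + y = 2 • y → x = y

def IsHermite {M : Type*} [AddCommMonoid M] (b : M) : Prop :=
  ∀ x y : M, 2 • b + x = b + y → b + x = y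

section

variable {M : Type*} [AddCommMonoid M]

namespace IsSeparative

variable (hM : IsSeparative M) {s t : M}
include hM

theorem two_nsmul_eq_add_of_three_nsmul (h : 3 • s = 2 • s + t) : 2 • s = s + t := by
  apply hM
  · calc 2 • (2 • s) = s + 3 • s := by abel
      _ = s + (2 • s + t) := by rw [h]
      _ = 2 • s + (s + t) := by abel
  · calc 2 • s + (s + t) = 3 • s + t := by abel
      _ = 2 • s + t + t := by rw [h]
      _ = 2 • (s + t) := by abel

theorem add_nsmul_succ_of_add_nsmul_succ_succ (hs : 2 • s = s + t) (k : ℕ)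
    (h : s + (k + 2) • t = (k + 3) • t) : s + (k + 1) • t = (k + 2) • t := by
  apply hM
  · calc 2 • (s + (k + 1) • t) = 2 • s + (2 * k + 2) • t := by
          rw [nsmul_add, ← mul_nsmul']; ring_nf
      _ = s + (2 * k + 3) • t := by rw [hs, add_assoc, ← succ_nsmul']
      _ = s + (k + 1) • t + (k + 2) • t := by rw [add_assoc, ← add_nsmul]; ring_nf
  · calc s + (k + 1) • t + (k + 2) • t = s + (k + 2) • t + (k + 1) • t := by abel
      _ = (k + 3) • t + (k + 1) • t := by rw [h]
      _ = 2 • ((k + 2) • t) := by rw [← add_nsmul, ← mul_nsmul']; ring_nf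

theorem add_eq_two_nsmul (hs : 2 • s = s + t) :
    ∀ k : ℕ, s + (k + 1) • t = (k + 2) • t → s + t = 2 • t
  | 0, h => by simpa using h
  | k + 1, h => add_eq_two_nsmul hs k (hM.add_nsmul_succ_of_add_nsmul_succ_succ hs k h)

theorem eq_of_three_nsmul (h₁ : 3 • s = 2 • s + t) {k : ℕ}
    (h₂ : s + (k + 1) • t = (k + 2) • t) : s = t :=
  have hs := hM.two_nsmul_eq_add_of_three_nsmul h₁
  hM s t hs (hM.add_eq_two_nsmul hs k h₂)

end IsSeparative

theorem add_nsmul_of_two_nsmul_add {a x y : M} (h : 2 • a + x = a + y) (m : ℕ) :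
    a + m • y = (m + 1) • a + m • x := by
  induction m with
  | zero => simp
  | succ k ih =>
    calc a + (k + 1) • y = (a + k • y) + y := by rw [succ_nsmul]; abel
      _ = (k • a + k • x) + (a + y) := by rw [ih, succ_nsmul]; abel
      _ = (k • a + k • x) + (2 • a + x) := by rw [h]
      _ = (k + 1 + 1) • a + (k + 1) • x := by simp only [succ_nsmul]; abel

theorem IsSeparative.isHermite_of_srCond (hM : IsSeparative M) {a : M} {n : ℕ} (hn : 0 < n)
    (ha : SRCond a n) : IsHermite a := by
  intro x y hxy
  obtain ⟨e, -, he⟩ := ha (a + n • x) (n • y) (by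
    rw [add_nsmul_of_two_nsmul_add hxy n, succ_nsmul]; abel)
  have hcancel : a + x + a = y + a := by rw [add_comm y, ← hxy]; abel
  obtain ⟨k, rfl⟩ := Nat.exists_eq_add_one_of_ne_zero hn.ne'
  apply hM.eq_of_three_nsmul (k := k)
  · calc 3 • (a + x) = (a + x + a) + (a + x) + x := by abel
      _ = 2 • (a + x) + y := by rw [hcancel]; abel
  · calc a + x + (k + 1) • y = (a + x + a) + (e + (k + 1) • x) := by rw [← he]; abel
      _ = y + (e + (a + (k + 1) • x)) := by rw [hcancel]; abel
      _ = (k + 2) • y := by rw [he, ← succ_nsmul']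

theorem IsHermite.srCond_two {a : M} (ha : IsHermite a) : SRCond a 2 :=
  fun x y hxy => ⟨a, two_nsmul a, ha x y hxy⟩

theorem exists_srCond_of_sr_lt_top {a : M} (h : sr a < ⊤) :
    ∃ m : ℕ, 0 < m ∧ SRCond a m ∧ sr a = m :=
  csInf_mem (s := {n : ℕ∞ | ∃ m : ℕ, 0 < m ∧ SRCond a m ∧ n = (m : ℕ∞)}) <|
    Set.nonempty_iff_ne_empty.2 fun hempty => by simp [sr, hempty] at h

theorem sr_le_two_of_isHermite {a : M} (ha : IsHermite a) : sr a ≤ 2 :=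
  sInf_le ⟨2, two_pos, ha.srCond_two, rfl⟩

end

theorem stmt_16 {M : Type*} [AddCommMonoid M]
    (hsep : ∀ x y : M, 2 • x = x + y → x + y = 2 • y → x = y) (a : M) :
    List.TFAE [sr a < ⊤, sr a ≤ 2,
      ∀ x y : M, 2 • a + x = a + y → a + x = y] ∧
    (sr a = 1 ∨ sr a = 2 ∨ sr a = ⊤) := by
  have hM : IsSeparative M := hsep
  have hHermite : sr a < ⊤ → IsHermite a := fun h => by
    obtain ⟨m, hm, ha, -⟩ := exists_srCond_of_sr_lt_top h
    exact hM.isHermite_of_srCond hm ha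
  refine ⟨?_, ?_⟩
  · tfae_have 1 → 3 := hHermite
    tfae_have 3 → 2 := sr_le_two_of_isHermite
    tfae_have 2 → 1 := fun h => h.trans_lt (ENat.natCast_lt_top 2)
    tfae_finish
  · rcases (le_top : sr a ≤ ⊤).eq_or_lt with h | h
    · exact Or.inr (Or.inr h)
    · obtain ⟨m, hm, -, hsr⟩ := exists_srCond_of_sr_lt_top h
      have hm2 : (m : ℕ∞) ≤ 2 := hsr ▸ sr_le_two_of_isHermite (hHermite h)
      have : m ≤ 2 := by exact_mod_cast hm2
      interval_cases m <;> simp [hsr]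
end

section
/- Let M be a separative commutative additive monoid. Then the stable rank function is constant on each archimedean component of M; that is, if a, b ∈ M are asymptotic (a ≍ b), then sr(a) = sr(b). -/
section StableRankAux

variable {M : Type*} [AddCommMonoid M]

/-- From `u + p = u + q` and `u + d = σ • p` we get `σ • p + k • p = σ • p + k • q`. -/
private lemma sr_powAdd (u p q d : M) (σ : ℕ) (h1 : u + p = u + q) (h2 : u + d = σ • p) :
    ∀ k : ℕ, σ • p + k • p = σ • p + k • q := by
  have L1 : σ • p + p = σ • p + q := by
    calc σ • p + p = (u + p) + d := by rw [← h2]; abel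
      _ = (u + q) + d := by rw [h1]
      _ = σ • p + q := by rw [← h2]; abel
  intro k
  induction k with
  | zero => simp
  | succ k ih =>
    calc σ • p + (k + 1) • p = (σ • p + p) + k • p := by rw [succ_nsmul]; abel
      _ = (σ • p + q) + k • p := by rw [L1]
      _ = (σ • p + k • p) + q := by abel
      _ = (σ • p + k • q) + q := by rw [ih]
      _ = σ • p + (k + 1) • q := by rw [succ_nsmul]; abel

/-- From the equalities of the `(s+2)`-nd and `(s+3)`-rd multiples, derive
`(s+1) • p + q = (s+2) • p` (separativity). -/
private lemma sr_star (hsep : ∀ x y : M, 2 • x = x + y → x + y = 2 • y → x = y)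
    (s : ℕ) (p q : M) (hA : (s + 2) • p = (s + 2) • q) (hB : (s + 3) • p = (s + 3) • q) :
    (s + 1) • p + q = (s + 2) • p := by
  have hp1 : (s + 1) • p = s • p + p := succ_nsmul p s
  have hp2 : (s + 2) • p = (s + 1) • p + p := by
    rw [show s + 2 = (s + 1) + 1 by omega, succ_nsmul]
  have hp3 : (s + 3) • p = (s + 2) • p + p := by
    rw [show s + 3 = (s + 2) + 1 by omega, succ_nsmul]
  have hq3 : (s + 3) • q = (s + 2) • q + q := by
    rw [show s + 3 = (s + 2) + 1 by omega, succ_nsmul]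
  apply hsep
  · rw [two_nsmul]
    calc ((s + 1) • p + q) + ((s + 1) • p + q)
        = s • p + ((s + 2) • p + q) + q := by rw [hp2, hp1]; abel
      _ = s • p + ((s + 2) • q + q) + q := by rw [hA]
      _ = s • p + (s + 3) • q + q := by rw [hq3]
      _ = s • p + (s + 3) • p + q := by rw [hB]
      _ = ((s + 1) • p + q) + (s + 2) • p := by rw [hp3, hp2, hp1]; abel
  · rw [two_nsmul]
    calc ((s + 1) • p + q) + (s + 2) • p
        = (s + 1) • p + ((s + 2) • p + q) := by abel
      _ = (s + 1) • p + ((s + 2) • q + q) := by rw [hA]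
      _ = (s + 1) • p + (s + 3) • q := by rw [hq3]
      _ = (s + 1) • p + (s + 3) • p := by rw [hB]
      _ = (s + 2) • p + (s + 2) • p := by rw [hp3, hp2]; abel

/-- Iterating `sr_star`. -/
private lemma sr_claim (s : ℕ) (p q : M) (star : (s + 1) • p + q = (s + 2) • p) :
    ∀ j i : ℕ, i + j = s + 1 →
      (s + 1) • p + (s + 1) • q = ((s + 1) + j) • p + i • q := by
  intro j
  induction j with
  | zero =>
    intro i hi
    have hi' : i = s + 1 := by omega
    subst hi'
    simp
  | succ j ih =>
    intro i hi
    have IH := ih (i + 1) (by omega)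
    calc (s + 1) • p + (s + 1) • q
        = ((s + 1) + j) • p + (i + 1) • q := IH
      _ = ((s + 1) + j) • p + (i • q + q) := by rw [succ_nsmul]
      _ = (q + ((s + 1) • p + j • p)) + i • q := by rw [add_nsmul p (s + 1) j]; abel
      _ = ((s + 2) • p + j • p) + i • q := by rw [← star]; abel
      _ = ((s + 1) + (j + 1)) • p + i • q := by
          rw [show (s + 1) + (j + 1) = (s + 2) + j by omega, add_nsmul p (s + 2) j]

/-- Consecutive-power cancellation in a separative monoid. -/
private lemma sr_pow_cancel (hsep : ∀ x y : M, 2 • x = x + y → x + y = 2 • y → x = y) :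
    ∀ m : ℕ, ∀ p q : M, m • p = m • q → (m + 1) • p = (m + 1) • q → p = q := by
  intro m
  induction m with
  | zero => intro p q _ h; simpa using h
  | succ m ih =>
    cases m with
    | zero => intro p q h _; simpa using h
    | succ s =>
      intro p q hA hB
      have hA' : (s + 2) • p = (s + 2) • q := hA
      have hB' : (s + 3) • p = (s + 3) • q := hB
      have star1 := sr_star hsep s p q hA' hB'
      have star2 := sr_star hsep s q p hA'.symm hB'.symm
      have claim1 := sr_claim s p q star1 (s + 1) 0 (by omega)
      have claim2 := sr_claim s q p star2 (s + 1) 0 (by omega)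
      have expand1 : ((s + 1) + (s + 1)) • p + (0 : ℕ) • q = (s + 1) • p + (s + 1) • p := by
        rw [add_nsmul, zero_nsmul, add_zero]
      have key : (s + 1) • p = (s + 1) • q := by
        apply hsep
        · rw [two_nsmul]
          exact ((claim1.trans expand1).symm)
        · rw [two_nsmul]
          calc (s + 1) • p + (s + 1) • q
              = (s + 1) • q + (s + 1) • p := by abel
            _ = ((s + 1) + (s + 1)) • q + (0 : ℕ) • p := claim2
            _ = (s + 1) • q + (s + 1) • q := by rw [add_nsmul, zero_nsmul, add_zero]
      exact ih p q key hA
    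
/-- Cancellation of an element dominated by multiples of both sides, in a
separative monoid. -/
private lemma sr_cancel (hsep : ∀ x y : M, 2 • x = x + y → x + y = 2 • y → x = y)
    (u p q d e : M) (σ τ : ℕ)
    (h1 : u + p = u + q) (h2 : u + d = σ • p) (h3 : u + e = τ • q) : p = q := by
  have h2' : u + (d + τ • p) = (σ + τ) • p := by rw [add_nsmul, ← h2]; abel
  have h3' : u + (e + σ • q) = (σ + τ) • q := by rw [add_nsmul, ← h3]; abel
  have hpq : (σ + τ) • p = (σ + τ) • q := by
    apply hsep
    · rw [two_nsmul]; exact sr_powAdd u p q _ (σ + τ) h1 h2' (σ + τ)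
    · rw [two_nsmul]
      have h := sr_powAdd u q p _ (σ + τ) h1.symm h3' (σ + τ)
      calc (σ + τ) • p + (σ + τ) • q = (σ + τ) • q + (σ + τ) • p := by abel
        _ = (σ + τ) • q + (σ + τ) • q := h.symm
  have hpq1 : ((σ + τ) + 1) • p = ((σ + τ) + 1) • q := by
    have L := sr_powAdd u p q _ (σ + τ) h1 h2' 1
    rw [one_nsmul, one_nsmul] at L
    calc ((σ + τ) + 1) • p = (σ + τ) • p + p := succ_nsmul p (σ + τ)
      _ = (σ + τ) • p + q := L
      _ = (σ + τ) • q + q := by rw [hpq]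
      _ = ((σ + τ) + 1) • q := (succ_nsmul q (σ + τ)).symm
  exact sr_pow_cancel hsep (σ + τ) p q hpq hpq1

/-- `SRCond` passes to positive multiples. -/
private lemma sr_srcond_nsmul (a : M) (n : ℕ) (h : SRCond a n) :
    ∀ t : ℕ, SRCond ((t + 1) • a) n := by
  intro t
  induction t with
  | zero =>
    have h0 : ((0 + 1 : ℕ)) • a = a := by norm_num
    rw [h0]; exact h
  | succ t ih =>
    intro x y hxy
    have hexp : ((t + 1 + 1) : ℕ) • a = (t + 1) • a + a := succ_nsmul a (t + 1)
    have hsm : n • ((t + 1 + 1) • a) = n • ((t + 1) • a) + n • a := by rw [hexp, smul_add]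
    have h1 : n • a + (n • ((t + 1) • a) + x) = a + ((t + 1) • a + y) := by
      rw [hsm, hexp] at hxy
      calc n • a + (n • ((t + 1) • a) + x)
          = (n • ((t + 1) • a) + n • a) + x := by abel
        _ = ((t + 1) • a + a) + y := hxy
        _ = a + ((t + 1) • a + y) := by abel
    obtain ⟨e₁, he₁, he₁'⟩ := h _ _ h1
    have h2 : n • ((t + 1) • a) + (e₁ + x) = (t + 1) • a + y := by
      calc n • ((t + 1) • a) + (e₁ + x) = e₁ + (n • ((t + 1) • a) + x) := by abel
        _ = (t + 1) • a + y := he₁'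
    obtain ⟨E, hE, hE'⟩ := ih _ _ h2
    refine ⟨E + e₁, ?_, ?_⟩
    · calc n • ((t + 1 + 1) • a) = n • ((t + 1) • a) + n • a := hsm
        _ = ((t + 1) • a + E) + (a + e₁) := by rw [hE, he₁]
        _ = ((t + 1) • a + a) + (E + e₁) := by abel
        _ = (t + 1 + 1) • a + (E + e₁) := by rw [← hexp]
    · calc (E + e₁) + x = E + (e₁ + x) := by abel
        _ = y := hE'

/-- Transfer of the 1-stable rank condition down from `b + v` to `b`,
when `(b+v) + w = K • b`. -/
private lemma sr_transfer_one (hsep : ∀ x y : M, 2 • x = x + y → x + y = 2 • y → x = y)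
    (b v w : M) (K : ℕ) (hw : (b + v) + w = K • b) (h : SRCond (b + v) 1) :
    SRCond b 1 := by
  intro x y hxy
  rw [one_nsmul] at hxy
  have hcx : (1 : ℕ) • (b + v) + x = (b + v) + y := by
    rw [one_nsmul]
    calc b + v + x = (b + x) + v := by abel
      _ = (b + y) + v := by rw [hxy]
      _ = b + v + y := by abel
  obtain ⟨f, hf, hf'⟩ := h x y hcx
  rw [one_nsmul] at hf
  have hb : b = b + f := by
    apply sr_cancel hsep v b (b + f) (b + w) (b + w + K • f) K K
    · calc v + b = (b + v) := by abel
        _ = (b + v) + f := hf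
        _ = v + (b + f) := by abel
    · rw [← hw]; abel
    · rw [smul_add, ← hw]; abel
  exact ⟨f, by rw [one_nsmul]; exact hb, hf'⟩

/-- Transfer of the `(s+2)`-stable rank condition down from `b + v` to `b`,
when `(b+v) + w = K • b`. -/
private lemma sr_transfer_ge2 (hsep : ∀ x y : M, 2 • x = x + y → x + y = 2 • y → x = y)
    (b v w : M) (K s : ℕ) (hw : (b + v) + w = K • b) (h : SRCond (b + v) (s + 2)) :
    SRCond b (s + 2) := by
  intro x y hxy
  have hb2 : (s + 2) • b = (s + 1) • b + b := by
    rw [show s + 2 = (s + 1) + 1 by omega, succ_nsmul]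
  have hby : b + y = ((s + 1) • b + b) + x := by
    rw [← hxy, hb2]
  have stepA : ∀ j : ℕ, b + j • y = j • x + (j • ((s + 1) • b) + b) := by
    intro j
    induction j with
    | zero => simp
    | succ j ih =>
      calc b + (j + 1) • y = (b + j • y) + y := by rw [succ_nsmul]; abel
        _ = (j • x + (j • ((s + 1) • b) + b)) + y := by rw [ih]
        _ = (j • x + j • ((s + 1) • b)) + (b + y) := by abel
        _ = (j • x + j • ((s + 1) • b)) + (((s + 1) • b + b) + x) := by rw [hby]
        _ = (j + 1) • x + ((j + 1) • ((s + 1) • b) + b) := by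
            rw [succ_nsmul x j, succ_nsmul ((s + 1) • b) j]; abel
  have stepB : (s + 2) • (b + v) + ((K + 1) • x + ((s + 1) • w + (s + 1) • b))
      = (b + v) + (K + 1) • y := by
    have h1 : (b + v) + (K + 1) • y = v + (b + (K + 1) • y) := by abel
    rw [h1, stepA (K + 1)]
    rw [smul_comm (K + 1) (s + 1) b, succ_nsmul b K, ← hw]
    have hsplit2 : (s + 2) • (b + v) = (s + 1) • (b + v) + (b + v) := by
      rw [show s + 2 = (s + 1) + 1 by omega, succ_nsmul]
    rw [hsplit2]
    simp only [smul_add]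
    abel
  obtain ⟨G, hG, hG'⟩ := h ((K + 1) • x + ((s + 1) • w + (s + 1) • b)) ((K + 1) • y) stepB
  have stepD : b + (G + ((K + 1) • x + ((s + 1) • w + s • b))) = (K + 1) • y := by
    rw [← hG', show (s + 1) • b = s • b + b from succ_nsmul b s]
    abel
  have key : (s + 1) • b + x = y := by
    apply sr_cancel hsep b ((s + 1) • b + x) y (s • b + x)
      (G + ((K + 1) • x + ((s + 1) • w + s • b))) 1 (K + 1)
    · rw [← hxy, hb2]; abel
    · rw [one_nsmul, show (s + 1) • b = s • b + b from succ_nsmul b s]; abel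
    · exact stepD
  refine ⟨(s + 1) • b, ?_, key⟩
  rw [hb2]
  abel

/-- Main transfer lemma: the stable rank condition transfers along asymptotic
equivalence. -/
private lemma sr_transfer (hsep : ∀ x y : M, 2 • x = x + y → x + y = 2 • y → x = y)
    (a b z₁ z₂ : M) (m k : ℕ)
    (hm : a + z₁ = (m + 1) • b) (hk : b + z₂ = (k + 1) • a) :
    ∀ n : ℕ, 0 < n → SRCond a n → SRCond b n := by
  intro n hn h
  have hc : SRCond ((k + 1) • a) n := sr_srcond_nsmul a n h k
  have hw : (b + z₂) + (k + 1) • z₁ = ((k + 1) * (m + 1)) • b := by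
    rw [hk, ← smul_add, hm, ← mul_nsmul, Nat.mul_comm]
  have hSR : SRCond (b + z₂) n := by rw [hk]; exact hc
  match n, hn with
  | 1, _ => exact sr_transfer_one hsep b z₂ ((k + 1) • z₁) _ hw hSR
  | (s + 2), _ => exact sr_transfer_ge2 hsep b z₂ ((k + 1) • z₁) _ s hw hSR

end StableRankAux

theorem stmt_17 {M : Type*} [AddCommMonoid M]
    (hsep : ∀ x y : M, 2 • x = x + y → x + y = 2 • y → x = y) (a b : M)
    (hab : ∃ m : ℕ, 0 < m ∧ ∃ z : M, a + z = m • b)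
    (hba : ∃ n : ℕ, 0 < n ∧ ∃ z : M, b + z = n • a) :
    sr a = sr b := by
  obtain ⟨m, hm, z₁, hz₁⟩ := hab
  obtain ⟨k, hk, z₂, hz₂⟩ := hba
  obtain ⟨m', rfl⟩ : ∃ m'', m = m'' + 1 := ⟨m - 1, by omega⟩
  obtain ⟨k', rfl⟩ : ∃ k'', k = k'' + 1 := ⟨k - 1, by omega⟩
  have fwd := sr_transfer hsep a b z₁ z₂ m' k' hz₁ hz₂
  have bwd := sr_transfer hsep b a z₂ z₁ k' m' hz₂ hz₁
  unfold sr
  congr 1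
  ext nn
  simp only [Set.mem_setOf_eq]
  constructor
  · rintro ⟨j, hj, hcond, rfl⟩; exact ⟨j, hj, fwd j hj hcond, rfl⟩
  · rintro ⟨j, hj, hcond, rfl⟩; exact ⟨j, hj, bwd j hj hcond, rfl⟩
end

section
/- Let M be a simple conical refinement commutative additive monoid. If there exists a positive integer n such that sr(a) ≤ n for every a ∈ M, then M is cancellative: a + x = a + y implies x = y for all a, x, y ∈ M. -/
def IsConical (M : Type*) [AddCommMonoid M] : Prop :=
  ∀ x y : M, x + y = 0 → x = 0 ∧ y = 0

section

variable {M : Type*} [AddCommMonoid M]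

def IsOrderUnit (a : M) : Prop :=
  ∀ x : M, ∃ n : ℕ, 0 < n ∧ ∃ z : M, x + z = n • a

theorem add_nsmul_eq_self {a b : M} (h : a + b = a) (k : ℕ) : a + k • b = a := by
  induction k with
  | zero => simp
  | succ k ih => rw [succ_nsmul, ← add_assoc, ih, h]

namespace IsConical

theorem eq_zero_of_isAddUnit (hM : IsConical M) {a : M} (ha : IsAddUnit a) : a = 0 := by
  obtain ⟨b, hb⟩ := isAddUnit_iff_exists.mp ha
  exact (hM a b hb.1).1

theorem addIrreducible_iff (hM : IsConical M) {g : M} :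
    AddIrreducible g ↔ g ≠ 0 ∧ ∀ u v : M, g = u + v → u = 0 ∨ v = 0 := by
  have hunit : ∀ u : M, IsAddUnit u ↔ u = 0 :=
    fun u ↦ ⟨hM.eq_zero_of_isAddUnit, fun h ↦ h ▸ isAddUnit_zero⟩
  simp only [_root_.addIrreducible_iff, hunit]

end IsConical

namespace SRCond

variable {a c s u v x y : M} {m n : ℕ}

theorem mono_s18 (h : SRCond a m) (hmn : m ≤ n) : SRCond a n := by
  intro x y hxy
  obtain ⟨k, rfl⟩ := Nat.exists_eq_add_of_le hmn
  obtain ⟨e, he, hey⟩ := h (k • a + x) y (by rwa [← add_assoc, ← add_nsmul])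
  exact ⟨e + k • a, by rw [add_nsmul, he, add_assoc], by rwa [add_assoc]⟩

theorem of_sr_le (h : sr a ≤ n) : SRCond a n := by
  set S : Set ℕ∞ := {n : ℕ∞ | ∃ m : ℕ, 0 < m ∧ SRCond a m ∧ n = (m : ℕ∞)}
  have hS : S.Nonempty := by
    by_contra hS
    rw [Set.not_nonempty_iff_eq_empty] at hS
    simp [sr, S, hS] at h
  obtain ⟨m, -, hm, hsr⟩ := csInf_mem hS
  have hmn : (m : ℕ∞) ≤ n := hsr ▸ h
  exact hm.mono_s18 (by exact_mod_cast hmn)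

theorem cancel (h : SRCond s n) (he : s + (n • s + u) = s + v) : n • s + u = v := by
  obtain ⟨e, hs, hv⟩ := h (s + u) v (by rwa [add_left_comm])
  rw [← hv, hs, add_comm s e, add_assoc]

theorem cancel_nsmul (h : SRCond s n) (k : ℕ) (he : k • s + (n • s + u) = k • s + v) :
    n • s + u = v := by
  induction k with
  | zero => simpa using he
  | succ k ih =>
    refine ih ?_
    rw [add_left_comm, h.cancel (u := k • s + u)]
    calc s + (n • s + (k • s + u)) = (k + 1) • s + (n • s + u) := by rw [succ_nsmul']; abel
      _ = s + (k • s + v) := by rw [he, succ_nsmul', add_assoc]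

theorem nsmul_add_eq_of_add_eq (h : SRCond c n) (hc : IsOrderUnit c) (hxy : a + x = a + y) :
    n • c + x = n • c + y := by
  obtain ⟨K, -, z, hz⟩ := hc a
  refine h.cancel_nsmul K ?_
  have hK : ∀ w, K • c + (n • c + w) = a + w + (z + n • c) := by
    intro w; rw [← hz]; abel
  rw [hK, hK, hxy]

theorem eq_zero_of_add_eq_self (hM : IsConical M)
    (hsimple : ∀ b : M, b ≠ 0 → IsOrderUnit b) (h : SRCond a n) {b : M} (hab : a + b = a) :
    b = 0 := by
  by_contra hb
  obtain ⟨m, -, c, hc⟩ := hsimple b hb a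
  have hac : a + (a + c) = a := by rw [hc, add_nsmul_eq_self hab]
  obtain ⟨e, -, he⟩ := h (a + n • c) 0 (by
    rw [add_zero]
    calc n • a + (a + n • c) = a + n • (a + c) := by rw [nsmul_add]; abel
      _ = a := add_nsmul_eq_self hac n)
  have ha : a = 0 := (hM a _ (hM e _ he).2).1
  exact hb (by simpa [ha] using hab)

end SRCond

namespace IsRefinementMonoid

variable {c d x g : M}

theorem exists_common_le (hM : IsConical M) (hR : IsRefinementMonoid M) (hc : c ≠ 0) (K : ℕ)
    {z : M} (h : c + z = K • d) : ∃ t, t ≠ 0 ∧ (∃ u, c = t + u) ∧ ∃ v, d = t + v := by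
  induction K generalizing c z with
  | zero => exact absurd (hM c z (by rwa [zero_nsmul] at h)).1 hc
  | succ K ih =>
    rw [succ_nsmul] at h
    obtain ⟨α, β, γ, δ, hαβ, -, hαγ, hβδ⟩ := hR c z (K • d) d h
    by_cases hβ : β = 0
    · rw [hβ, add_zero] at hαβ
      subst hαβ
      exact ih hc hαγ.symm
    · exact ⟨β, hβ, ⟨α, by rw [hαβ, add_comm]⟩, δ, hβδ⟩

theorem exists_two_nsmul_add (hM : IsConical M) (hR : IsRefinementMonoid M)
    (hsimple : ∀ b : M, b ≠ 0 → IsOrderUnit b) {s : M} (hs : s ≠ 0) (hs' : ¬AddIrreducible s) :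
    ∃ t, t ≠ 0 ∧ ∃ w, s = 2 • t + w := by
  rw [hM.addIrreducible_iff] at hs'
  push Not at hs'
  obtain ⟨u, v, rfl, hu, hv⟩ := hs' hs
  obtain ⟨K, -, z, hz⟩ := hsimple v hv u
  obtain ⟨t, ht, ⟨u', rfl⟩, v', rfl⟩ := exists_common_le hM hR hu K hz
  exact ⟨t, ht, u' + v', by rw [two_nsmul]; abel⟩

theorem exists_nsmul_add (hM : IsConical M) (hR : IsRefinementMonoid M)
    (hsimple : ∀ b : M, b ≠ 0 → IsOrderUnit b) (hatomless : ∀ g : M, ¬AddIrreducible g)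
    (hx : x ≠ 0) (k : ℕ) : ∃ s, s ≠ 0 ∧ ∃ w, x = k • s + w := by
  have hpow : ∀ j : ℕ, ∃ s, s ≠ 0 ∧ ∃ w, x = 2 ^ j • s + w := by
    intro j
    induction j with
    | zero => exact ⟨x, hx, 0, by simp⟩
    | succ j ih =>
      obtain ⟨s, hs, w, rfl⟩ := ih
      obtain ⟨t, ht, w', rfl⟩ := exists_two_nsmul_add hM hR hsimple hs (hatomless s)
      exact ⟨t, ht, 2 ^ j • w' + w, by rw [nsmul_add, smul_smul, ← pow_succ, add_assoc]⟩
  obtain ⟨s, hs, w, rfl⟩ := hpow k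
  obtain ⟨d, hd⟩ := Nat.exists_eq_add_of_le Nat.lt_two_pow_self.le
  exact ⟨s, hs, d • s + w, by rw [hd, add_nsmul, add_assoc]⟩

theorem exists_eq_nsmul_of_addIrreducible (hM : IsConical M) (hR : IsRefinementMonoid M)
    (hg : AddIrreducible g) (K : ℕ) {z w : M} (h : z + w = K • g) : ∃ i : ℕ, z = i • g := by
  induction K generalizing z w with
  | zero => exact ⟨0, by rw [zero_nsmul]; exact (hM z w (by rwa [zero_nsmul] at h)).1⟩
  | succ K ih =>
    rw [succ_nsmul] at h
    obtain ⟨α, β, γ, δ, rfl, -, hαγ, hβδ⟩ := hR z w (K • g) g h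
    obtain ⟨i, rfl⟩ := ih hαγ.symm
    rcases (hM.addIrreducible_iff.mp hg).2 β δ hβδ with rfl | rfl
    · exact ⟨i, by rw [add_zero]⟩
    · exact ⟨i + 1, by rw [hβδ, add_zero, succ_nsmul]⟩

end IsRefinementMonoid

section Cancellation

variable {n : ℕ} {a x y g : M}

theorem nsmul_left_injective_of_srCond (hM : IsConical M)
    (hsimple : ∀ b : M, b ≠ 0 → IsOrderUnit b) (hSR : ∀ a : M, SRCond a n) (hg : g ≠ 0) :
    Function.Injective (fun k : ℕ ↦ k • g) := by
  intro p q hpq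
  wlog hle : p ≤ q generalizing p q
  · exact (this hpq.symm (le_of_not_ge hle)).symm
  obtain ⟨d, rfl⟩ := Nat.exists_eq_add_of_le hle
  have hd : d • g = 0 :=
    (hSR _).eq_zero_of_add_eq_self hM hsimple (by rw [← add_nsmul]; exact hpq.symm)
  cases d with
  | zero => rfl
  | succ d => exact absurd (hM _ _ (by rwa [succ_nsmul] at hd)).2 hg

theorem add_left_cancel_of_addIrreducible (hM : IsConical M) (hR : IsRefinementMonoid M)
    (hsimple : ∀ b : M, b ≠ 0 → IsOrderUnit b) (hSR : ∀ a : M, SRCond a n)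
    (hg : AddIrreducible g) (hxy : a + x = a + y) : x = y := by
  have hg0 : g ≠ 0 := (hM.addIrreducible_iff.mp hg).1
  have hmul : ∀ z : M, ∃ i : ℕ, z = i • g := fun z ↦ by
    obtain ⟨K, -, w, hw⟩ := hsimple g hg0 z
    exact hR.exists_eq_nsmul_of_addIrreducible hM hg K hw
  obtain ⟨l, rfl⟩ := hmul a
  obtain ⟨i, rfl⟩ := hmul x
  obtain ⟨j, rfl⟩ := hmul y
  have hij : l + i = l + j :=
    nsmul_left_injective_of_srCond hM hsimple hSR hg0 (by simpa only [add_nsmul] using hxy)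
  rw [Nat.add_left_cancel hij]

theorem add_left_cancel_of_forall_not_addIrreducible (hM : IsConical M)
    (hR : IsRefinementMonoid M) (hsimple : ∀ b : M, b ≠ 0 → IsOrderUnit b)
    (hSR : ∀ a : M, SRCond a n) (hatomless : ∀ g : M, ¬AddIrreducible g)
    (hxy : a + x = a + y) : x = y := by
  rcases eq_or_ne x 0 with rfl | hx
  · exact ((hSR a).eq_zero_of_add_eq_self hM hsimple (by rw [← hxy, add_zero])).symm
  obtain ⟨s, hs, w, rfl⟩ := hR.exists_nsmul_add hM hsimple hatomless hx n
  exact (hSR s).cancel_nsmul n ((hSR s).nsmul_add_eq_of_add_eq (hsimple s hs) hxy)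

end Cancellation

end

theorem stmt_18_general {M : Type*} [AddCommMonoid M]
    (hconical : ∀ x y : M, x + y = 0 → x = 0 ∧ y = 0)
    (href : ∀ x1 x2 y1 y2 : M, x1 + x2 = y1 + y2 →
      ∃ z11 z12 z21 z22 : M,
        x1 = z11 + z12 ∧ x2 = z21 + z22 ∧ y1 = z11 + z21 ∧ y2 = z12 + z22)
    (hsimple : ∀ a : M, a ≠ 0 → ∀ x : M, ∃ n : ℕ, 0 < n ∧ ∃ z : M, x + z = n • a)
    (hbdd : ∃ n : ℕ, 0 < n ∧ ∀ a : M, sr a ≤ (n : ℕ∞)) :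
    ∀ a x y : M, a + x = a + y → x = y := by
  obtain ⟨n, -, hbdd⟩ := hbdd
  have hSR : ∀ a : M, SRCond a n := fun a ↦ .of_sr_le (hbdd a)
  intro a x y hxy
  by_cases hatom : ∃ g : M, AddIrreducible g
  · obtain ⟨g, hg⟩ := hatom
    exact add_left_cancel_of_addIrreducible hconical href hsimple hSR hg hxy
  · push Not at hatom
    exact add_left_cancel_of_forall_not_addIrreducible hconical href hsimple hSR hatom hxy

theorem stmt_18 {M : Type*} [AddCommMonoid M]
    (hconical : ∀ x y : M, x + y = 0 → x = 0 ∧ y = 0)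
    (href : ∀ x1 x2 y1 y2 : M, x1 + x2 = y1 + y2 →
      ∃ z11 z12 z21 z22 : M,
        x1 = z11 + z12 ∧ x2 = z21 + z22 ∧ y1 = z11 + z21 ∧ y2 = z12 + z22)
    (hnz : ∃ x : M, x ≠ 0)
    (hsimple : ∀ a : M, a ≠ 0 → ∀ x : M, ∃ n : ℕ, 0 < n ∧ ∃ z : M, x + z = n • a)
    (hbdd : ∃ n : ℕ, 0 < n ∧ ∀ a : M, sr a ≤ (n : ℕ∞)) :
    ∀ a x y : M, a + x = a + y → x = y :=
  stmt_18_general hconical href hsimple hbdd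
end
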